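/- Let G be a metabelian group, let x, y ∈ G, and let δ be a natural number. Then y^{-δ}·x^{-δ}·(xy)^{δ} = ∏_{l=1}^{δ-1} ∏_{s=0}^{l-1} (x^{s} y^{l})⁻¹ · ⁅x,y⁆⁻¹ · (x^{s} y^{l}) (all factors lie in the abelian subgroup G', so the order of the product is irrelevant). -/

import Mathlib

/-!
Put `D δ = y^(-δ) x^(-δ) (xy)^δ`, `c = ⁅x,y⁆⁻¹` and `a^g = g⁻¹ a g`. In any group
`D (δ + 1) = ⁅y^δ, x⁆^y · (D δ)^(xy)`. When `G'` is abelian, conjugation of `G` on `G'` factors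
through `G/G'`, so conjugating the factor `c^(x^s y^l)` by `xy` gives `c^(x^(s+1) y^(l+1))`;
together with `⁅y^δ, x⁆ = ∏_{l<δ} c^(y^l)` this shows that the product on the right obeys the
same recursion.
-/

/-- The commutator ⁅a,b⁆ = a⁻¹b⁻¹ab (paper convention). -/
def pcomm {G : Type*} [Group G] (a b : G) : G := a⁻¹ * b⁻¹ * a * b

namespace Subgroup

variable {G ι : Type*} [Group G] {H : Subgroup G}

theorem list_prod_map_mul_of_mem [IsMulCommutative H] (l : List ι) {f g : ι → G}
    (hf : ∀ i, f i ∈ H) (hg : ∀ i, g i ∈ H) :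
    (l.map fun i => f i * g i).prod = (l.map f).prod * (l.map g).prod := by
  lift f to ι → H using hf
  lift g to ι → H using hg
  open IsMulCommutative in
  simpa only [List.map_map, Function.comp_def, map_mul, map_list_prod, coe_subtype, coe_mul] using
    congrArg H.subtype (List.prod_map_mul (l := l) (f := f) (g := g))

theorem conj_eq_conj_of_inv_mul_mem [H.Normal] [IsMulCommutative H] {w g h : G} (hw : w ∈ H)
    (hgh : g⁻¹ * h ∈ H) : h⁻¹ * w * h = g⁻¹ * w * g := by
  obtain ⟨d, hd, rfl⟩ : ∃ d ∈ H, h = g * d := ⟨g⁻¹ * h, hgh, by group⟩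
  have hconj : g⁻¹ * w * g ∈ H := Normal.conj_mem' ‹_› w hw g
  calc (g * d)⁻¹ * w * (g * d) = d⁻¹ * ((g⁻¹ * w * g) * d) := by group
    _ = g⁻¹ * w * g := by rw [setLike_mul_comm hconj hd, inv_mul_cancel_left]

end Subgroup

theorem conj_list_prod {G ι : Type*} [Group G] (g : G) (l : List ι) (f : ι → G) :
    g⁻¹ * (l.map f).prod * g = (l.map fun i => g⁻¹ * f i * g).prod := by
  simpa [List.map_map, Function.comp_def] using map_list_prod (MulAut.conj g⁻¹) (l.map f)

section

open scoped commutatorElement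

variable {G : Type*} [Group G]

theorem conj_eq_conj_of_abelianization_of_eq [IsMulCommutative (commutator G)] {w g h : G}
    (hw : w ∈ commutator G) (hgh : Abelianization.of g = Abelianization.of h) :
    h⁻¹ * w * h = g⁻¹ * w * g := by
  have hmem : g⁻¹ * h ∈ commutator G :=
    Abelianization.ker_of (G := G) ▸ (MonoidHom.eq_iff _).1 hgh.symm
  exact Subgroup.conj_eq_conj_of_inv_mul_mem hw hmem

theorem pcomm_eq_commutatorElement (a b : G) : pcomm a b = ⁅a⁻¹, b⁻¹⁆ := by
  simp [pcomm, commutatorElement_def]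

theorem pcomm_mem_commutator (a b : G) : pcomm a b ∈ commutator G := by
  rw [pcomm_eq_commutatorElement, commutator_def]
  exact Subgroup.commutator_mem_commutator (Subgroup.mem_top _) (Subgroup.mem_top _)

theorem conj_pcomm_inv_mem_commutator (a b g : G) : g⁻¹ * (pcomm a b)⁻¹ * g ∈ commutator G :=
  Subgroup.Normal.conj_mem' inferInstance _ (inv_mem (pcomm_mem_commutator a b)) g

theorem pcomm_pow_succ_left (x y : G) (n : ℕ) :
    pcomm (y ^ (n + 1)) x = y⁻¹ * pcomm (y ^ n) x * y * (pcomm x y)⁻¹ := by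
  simp only [pcomm]
  group

theorem pcomm_pow_left_eq_prod [IsMulCommutative (commutator G)] (x y : G) (n : ℕ) :
    pcomm (y ^ n) x = ((List.range n).map fun l => (y ^ l)⁻¹ * (pcomm x y)⁻¹ * y ^ l).prod := by
  induction n with
  | zero => simp [pcomm]
  | succ n ih =>
    rw [pcomm_pow_succ_left, ih, conj_list_prod, List.prod_range_succ', pow_zero, inv_one,
      one_mul, mul_one]
    have hconj (l : ℕ) : y⁻¹ * ((y ^ l)⁻¹ * (pcomm x y)⁻¹ * y ^ l) * y
        = (y ^ (l + 1))⁻¹ * (pcomm x y)⁻¹ * y ^ (l + 1) := by group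
    simp only [hconj]
    exact setLike_mul_comm (list_prod_mem (by simp [conj_pcomm_inv_mem_commutator]))
      (inv_mem (pcomm_mem_commutator x y))

theorem inv_pow_mul_inv_pow_mul_mul_pow_succ (x y : G) (δ : ℕ) :
    (y ^ (δ + 1))⁻¹ * (x ^ (δ + 1))⁻¹ * (x * y) ^ (δ + 1) =
      y⁻¹ * pcomm (y ^ δ) x * y *
        ((x * y)⁻¹ * ((y ^ δ)⁻¹ * (x ^ δ)⁻¹ * (x * y) ^ δ) * (x * y)) := by
  rw [pow_succ (x * y), pcomm]
  group

def pcommConjRow (x y : G) (l : ℕ) : G :=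
  ((List.range l).map fun s => (x ^ s * y ^ l)⁻¹ * (pcomm x y)⁻¹ * (x ^ s * y ^ l)).prod

def pcommConjProd (x y : G) (δ : ℕ) : G :=
  ((List.range δ).map (pcommConjRow x y)).prod

theorem pcommConjRow_mem_commutator (x y : G) (l : ℕ) : pcommConjRow x y l ∈ commutator G :=
  list_prod_mem (List.forall_mem_map.2 fun _ _ => conj_pcomm_inv_mem_commutator _ _ _)

theorem pcommConjRow_succ [IsMulCommutative (commutator G)] (x y : G) (l : ℕ) :
    pcommConjRow x y (l + 1) =
      (y ^ (l + 1))⁻¹ * (pcomm x y)⁻¹ * y ^ (l + 1) *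
        ((x * y)⁻¹ * pcommConjRow x y l * (x * y)) := by
  rw [pcommConjRow, List.prod_range_succ', pcommConjRow, conj_list_prod, pow_zero, one_mul]
  congr 3
  funext s
  rw [conj_eq_conj_of_abelianization_of_eq (g := x ^ s * y ^ l * (x * y))
    (inv_mem (pcomm_mem_commutator x y)) (by simp only [map_mul, map_pow, pow_succ]; ac_rfl)]
  group

theorem pcommConjProd_succ [IsMulCommutative (commutator G)] (x y : G) (δ : ℕ) :
    pcommConjProd x y (δ + 1) =
      y⁻¹ * pcomm (y ^ δ) x * y * ((x * y)⁻¹ * pcommConjProd x y δ * (x * y)) := by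
  rw [pcommConjProd, List.prod_range_succ', pcommConjProd]
  simp only [pcommConjRow_succ]
  rw [pcommConjRow, List.range_zero, List.map_nil, List.prod_nil, one_mul,
    Subgroup.list_prod_map_mul_of_mem _ (fun _ => conj_pcomm_inv_mem_commutator _ _ _)
      (fun l => Subgroup.Normal.conj_mem' inferInstance _ (pcommConjRow_mem_commutator x y l) _),
    pcomm_pow_left_eq_prod, conj_list_prod, conj_list_prod]
  congr 3
  funext l
  group

end

theorem stmt18 {G : Type*} [Group G]
    (hG : ∀ a b : G, a ∈ commutator G → b ∈ commutator G → a * b = b * a)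
    (x y : G) (δ : ℕ) :
    (y ^ δ)⁻¹ * (x ^ δ)⁻¹ * (x * y) ^ δ =
      ((List.range δ).map fun l =>
        ((List.range l).map fun s =>
          (x ^ s * y ^ l)⁻¹ * (pcomm x y)⁻¹ * (x ^ s * y ^ l)).prod).prod := by
  have : IsMulCommutative (commutator G) := .of_setLike_mul_comm fun a ha b hb => hG a b ha hb
  change _ = pcommConjProd x y δ
  induction δ with
  | zero => simp [pcommConjProd]
  | succ δ ih => rw [inv_pow_mul_inv_pow_mul_mul_pow_succ, ih, pcommConjProd_succ]
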